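/- Let Φ be a 3-CNF formula with clauses C_1,…,C_n, and let E consist of c_0, …, c_{n+1} together with exactly one of a_i and na_i for each i ∈ [1,m]. If for each clause C_i at least one atom of NV(c_i) is not in E, then E is an elementary set for P^Φ. -/

import Mathlib

structure Rule (α : Type) where
  B : Finset α
  F : Finset α
  H : Finset α

variable {α : Type}

/-- Z is outbound in Y for program P. -/
def Outbound [DecidableEq α] (P : Set (Rule α)) (Y Z : Finset α) : Prop :=
  ∃ r ∈ P, (r.H ∩ Z).Nonempty ∧ (r.B ∩ (Y \ Z)).Nonempty ∧
    r.B ∩ Z = ∅ ∧ r.H ∩ (Y \ Z) = ∅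

/-- Y is an elementary set for P. -/
def Elementary [DecidableEq α] (P : Set (Rule α)) (Y : Finset α) : Prop :=
  Y.Nonempty ∧ ∀ Z : Finset α, Z ⊂ Y → Z.Nonempty → Outbound P Y Z

/-- X is a disjunctive set for P. -/
def DisjSet [DecidableEq α] (P : Set (Rule α)) (X : Finset α) : Prop :=
  ∃ r ∈ P, 1 < (r.H ∩ X).card

/-- The projection P_X of P on a set X of atoms. -/
def proj [DecidableEq α] (P : Set (Rule α)) (X : Finset α) : Set (Rule α) :=
  {r' | ∃ r ∈ P, (r.B ∩ X).Nonempty ∧ (r.H ∩ X).Nonempty ∧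
        r' = ⟨r.B ∩ X, ∅, r.H ∩ X⟩}

/-- P is head-elementary-set-free. -/
def HEF [DecidableEq α] (P : Set (Rule α)) : Prop :=
  ∀ r ∈ P, ∀ E : Finset α, Elementary P E → (E ∩ r.H).card ≤ 1

/-- Atoms of the program `P^Φ`. -/
inductive Atom : Type
  | phi : Atom
  | a : ℕ → Atom
  | na : ℕ → Atom
  | c : ℕ → Atom
deriving DecidableEq

/-- The atom opposite to a literal (variable index, sign). -/
def oppAtom : ℕ × Bool → Atom
  | (v, true) => Atom.na v
  | (v, false) => Atom.a v

/-- The atom corresponding to a literal. -/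
def litAtom : ℕ × Bool → Atom
  | (v, true) => Atom.a v
  | (v, false) => Atom.na v

/-- NV(c_i): opposites of the atoms of the literals of clause C_i. -/
def NV (C : ℕ → Fin 3 → ℕ × Bool) (i : ℕ) : Finset Atom :=
  {oppAtom (C i 0), oppAtom (C i 1), oppAtom (C i 2)}

/-- The program `P^Φ` associated with a 3-CNF with m variables `A_1,…,A_m`
and n clauses `C_1,…,C_n`, the clauses given by `C`. -/
def PPhi (m n : ℕ) (C : ℕ → Fin 3 → ℕ × Bool) : Set (Rule Atom) :=
  ({⟨{Atom.phi}, ∅, {Atom.c 0, Atom.c (n+1)}⟩,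
    ⟨{Atom.c 0}, ∅, {Atom.c 1}⟩,
    ⟨{Atom.c (n+1), Atom.na 1}, ∅, {Atom.a 1}⟩,
    ⟨{Atom.c (n+1), Atom.a 1}, ∅, {Atom.na 1}⟩,
    ⟨{Atom.a m, Atom.na m}, ∅, {Atom.c 0}⟩} : Set (Rule Atom)) ∪
  {r | ∃ i ∈ Finset.Icc 1 n, ∃ α ∈ NV C i,
        r = ⟨{Atom.c i, α}, ∅, {Atom.c (i+1)}⟩} ∪
  {r | ∃ i ∈ Finset.Icc 1 (m-1),
        r = ⟨{Atom.a i, Atom.na (i+1)}, ∅, {Atom.a (i+1)}⟩ ∨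
        r = ⟨{Atom.a i, Atom.a (i+1)}, ∅, {Atom.na (i+1)}⟩ ∨
        r = ⟨{Atom.na i, Atom.na (i+1)}, ∅, {Atom.a (i+1)}⟩ ∨
        r = ⟨{Atom.na i, Atom.a (i+1)}, ∅, {Atom.na (i+1)}⟩}

/-- All variable indices mentioned by clauses 1..n lie in [1,m]. -/
def ValidCNF (m n : ℕ) (C : ℕ → Fin 3 → ℕ × Bool) : Prop :=
  ∀ i ∈ Finset.Icc 1 n, ∀ j : Fin 3, (C i j).1 ∈ Finset.Icc 1 m

/-- Truth assignment X satisfies the 3-CNF. -/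
def Sat (n : ℕ) (C : ℕ → Fin 3 → ℕ × Bool) (X : ℕ → Bool) : Prop :=
  ∀ i ∈ Finset.Icc 1 n, ∃ j : Fin 3, X (C i j).1 = (C i j).2

/-!
Call `a` a support of `b` within `Y` when some rule has head exactly `b` and a body that meets
`Y` only in `a`. If every atom of `Y` reaches every other along supports, `Y` is elementary: for a
proper nonempty `Z ⊂ Y`, a support path from an atom outside `Z` to one inside `Z` crosses into
`Z` along a support `a ↦ b`, and the rule behind it makes `Z` outbound in `Y`.

For `P^Φ` the atoms of `E` form a single cycle of supports
`c_0 → c_1 → ⋯ → c_{n+1} → v_1 → ⋯ → v_m → c_0`, where `v_i ∈ E` is the chosen one of `a_i, na_i`: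
the rule `c_i ∧ β → c_{i+1}` uses an atom `β ∈ NV(c_i)` missing from `E`, and each of the rules
through the variables has, besides its support, only the opposite of some `v_j` in its body.
-/

open Relation

theorem Relation.ReflTransGen.exists_rel_not_and {β : Type*} {r : β → β → Prop} {p : β → Prop}
    {a b : β} (h : ReflTransGen r a b) (ha : ¬ p a) (hb : p b) :
    ∃ x y, r x y ∧ ¬ p x ∧ p y := by
  induction h with
  | refl => exact absurd hb ha
  | @tail x y _ hxy ih =>
    by_cases hx : p x
    · exact ih hx
    · exact ⟨x, y, hxy, hx, hb⟩

def Supports (P : Set (Rule α)) (Y : Finset α) (a b : α) : Prop :=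
  a ∈ Y ∧ ∃ r ∈ P, r.H = {b} ∧ a ∈ r.B ∧ ∀ x ∈ r.B, x ≠ a → x ∉ Y

section Supports

variable {P : Set (Rule α)} {Y : Finset α} {a b x : α} {F : Finset α}

theorem supports_of_singleton (ha : a ∈ Y) (hr : ⟨{a}, F, {b}⟩ ∈ P) : Supports P Y a b :=
  ⟨ha, _, hr, rfl, Finset.mem_singleton_self a, by simp⟩

theorem supports_of_pair [DecidableEq α] (ha : a ∈ Y) (hx : x ∉ Y) (hr : ⟨{a, x}, F, {b}⟩ ∈ P) :
    Supports P Y a b :=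
  ⟨ha, _, hr, rfl, by simp, by rintro y hy hya; simp_all⟩

theorem Supports.outbound [DecidableEq α] {Z : Finset α} (hab : Supports P Y a b) (hZY : Z ⊆ Y)
    (ha : a ∉ Z) (hb : b ∈ Z) : Outbound P Y Z := by
  obtain ⟨haY, r, hr, hH, haB, hB⟩ := hab
  refine ⟨r, hr, ⟨b, by simp [hH, hb]⟩, ⟨a, by simp [haB, haY, ha]⟩, ?_, by simp [hH, hb]⟩
  refine Finset.eq_empty_of_forall_notMem fun x hx => ?_
  rw [Finset.mem_inter] at hx
  by_cases hxa : x = a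
  · exact ha (hxa ▸ hx.2)
  · exact hB x hx.1 hxa (hZY hx.2)

theorem elementary_of_forall_reflTransGen_supports [DecidableEq α] (hY : Y.Nonempty)
    (h : ∀ a ∈ Y, ∀ b ∈ Y, ReflTransGen (Supports P Y) a b) : Elementary P Y := by
  refine ⟨hY, fun Z hZ ⟨b, hb⟩ => ?_⟩
  obtain ⟨a, haY, ha⟩ := Finset.exists_of_ssubset hZ
  obtain ⟨x, y, hxy, hx, hy⟩ :=
    (h a haY b (hZ.subset hb)).exists_rel_not_and (p := (· ∈ Z)) ha hb
  exact hxy.outbound hZ.subset hx hy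

end Supports

theorem litAtom_eq_oppAtom_iff {i j : ℕ} {b b' : Bool} :
    litAtom (j, b') = oppAtom (i, b) ↔ j = i ∧ b' ≠ b := by
  cases b <;> cases b' <;> simp [litAtom, oppAtom]

/-- The set `E` of the theorem, with `litAtom (i, Q i)` the atom of `A_i` chosen by `Q`. -/
def cycleAtoms (m n : ℕ) (Q : ℕ → Bool) : Finset Atom :=
  (Finset.Icc 0 (n+1)).image Atom.c ∪ (Finset.Icc 1 m).image fun i => litAtom (i, Q i)

section CycleAtoms

variable {m n : ℕ} {C : ℕ → Fin 3 → ℕ × Bool} {Q : ℕ → Bool}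

theorem c_mem_cycleAtoms {k : ℕ} (hk : k ≤ n + 1) : Atom.c k ∈ cycleAtoms m n Q := by
  simp [cycleAtoms, hk]

theorem litAtom_mem_cycleAtoms {i : ℕ} (hi : 1 ≤ i) (him : i ≤ m) :
    litAtom (i, Q i) ∈ cycleAtoms m n Q := by
  simp only [cycleAtoms, Finset.mem_union, Finset.mem_image, Finset.mem_Icc]
  exact Or.inr ⟨i, ⟨hi, him⟩, rfl⟩

theorem oppAtom_notMem_cycleAtoms (i : ℕ) : oppAtom (i, Q i) ∉ cycleAtoms m n Q := by
  simp only [cycleAtoms, Finset.mem_union, Finset.mem_image, not_or, not_exists, not_and]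
  refine ⟨fun k _ hk => (by revert hk; cases Q i <;> simp [oppAtom]), fun j _ hj => ?_⟩
  obtain ⟨rfl, hne⟩ := litAtom_eq_oppAtom_iff.1 hj
  exact hne rfl

theorem supports_c_succ (hcov : ∀ i ∈ Finset.Icc 1 n, ∃ β ∈ NV C i, β ∉ cycleAtoms m n Q)
    {i : ℕ} (hi : i ≤ n) :
    Supports (PPhi m n C) (cycleAtoms m n Q) (Atom.c i) (Atom.c (i + 1)) := by
  rcases Nat.eq_zero_or_pos i with rfl | hi0
  · exact supports_of_singleton (F := ∅) (c_mem_cycleAtoms (Nat.zero_le _))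
      (Or.inl (Or.inl (by simp)))
  · obtain ⟨β, hβ, hβE⟩ := hcov i (Finset.mem_Icc.2 ⟨hi0, hi⟩)
    exact supports_of_pair (F := ∅) (c_mem_cycleAtoms (by omega)) hβE
      (Or.inl (Or.inr ⟨i, Finset.mem_Icc.2 ⟨hi0, hi⟩, β, hβ, rfl⟩))

theorem supports_c_last_litAtom_one :
    Supports (PPhi m n C) (cycleAtoms m n Q) (Atom.c (n + 1)) (litAtom (1, Q 1)) :=
  supports_of_pair (F := ∅) (c_mem_cycleAtoms le_rfl) (oppAtom_notMem_cycleAtoms 1)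
    (Or.inl (Or.inl (by cases Q 1 <;> simp [litAtom, oppAtom])))

theorem supports_litAtom_succ {i : ℕ} (hi : 1 ≤ i) (him : i < m) :
    Supports (PPhi m n C) (cycleAtoms m n Q) (litAtom (i, Q i)) (litAtom (i + 1, Q (i + 1))) :=
  supports_of_pair (F := ∅) (litAtom_mem_cycleAtoms hi him.le) (oppAtom_notMem_cycleAtoms (i + 1))
    (Or.inr ⟨i, Finset.mem_Icc.2 ⟨hi, by omega⟩,
      by cases Q i <;> cases Q (i + 1) <;> simp [litAtom, oppAtom]⟩)

theorem supports_litAtom_last_c_zero (hm : 1 ≤ m) :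
    Supports (PPhi m n C) (cycleAtoms m n Q) (litAtom (m, Q m)) (Atom.c 0) :=
  supports_of_pair (F := ∅) (litAtom_mem_cycleAtoms hm le_rfl) (oppAtom_notMem_cycleAtoms m)
    (Or.inl (Or.inl (by cases Q m <;> simp [litAtom, oppAtom, Finset.pair_comm])))

theorem reflTransGen_c_of_le (hcov : ∀ i ∈ Finset.Icc 1 n, ∃ β ∈ NV C i, β ∉ cycleAtoms m n Q)
    {i j : ℕ} (hij : i ≤ j) (hj : j ≤ n + 1) :
    ReflTransGen (Supports (PPhi m n C) (cycleAtoms m n Q)) (Atom.c i) (Atom.c j) :=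
  (reflTransGen_of_succ_of_le (fun k l => Supports (PPhi m n C) (cycleAtoms m n Q) (Atom.c k)
    (Atom.c l)) (fun k hk => supports_c_succ hcov (by grind)) hij).lift _ fun _ _ h => h

theorem reflTransGen_litAtom_of_le {i j : ℕ} (hi : 1 ≤ i) (hij : i ≤ j) (hj : j ≤ m) :
    ReflTransGen (Supports (PPhi m n C) (cycleAtoms m n Q)) (litAtom (i, Q i))
      (litAtom (j, Q j)) :=
  (reflTransGen_of_succ_of_le (fun k l => Supports (PPhi m n C) (cycleAtoms m n Q)
    (litAtom (k, Q k)) (litAtom (l, Q l)))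
    (fun k hk => supports_litAtom_succ (by grind) (by grind)) hij).lift _ fun _ _ h => h

theorem reflTransGen_supports_cycleAtoms (hm : 1 ≤ m)
    (hcov : ∀ i ∈ Finset.Icc 1 n, ∃ β ∈ NV C i, β ∉ cycleAtoms m n Q)
    {x y : Atom} (hx : x ∈ cycleAtoms m n Q) (hy : y ∈ cycleAtoms m n Q) :
    ReflTransGen (Supports (PPhi m n C) (cycleAtoms m n Q)) x y := by
  have c_to_lit {k i : ℕ} (hk : k ≤ n + 1) (hi : 1 ≤ i) (him : i ≤ m) :
      ReflTransGen (Supports (PPhi m n C) (cycleAtoms m n Q)) (Atom.c k) (litAtom (i, Q i)) :=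
    ((reflTransGen_c_of_le hcov hk le_rfl).tail supports_c_last_litAtom_one).trans
      (reflTransGen_litAtom_of_le le_rfl hi him)
  have lit_to_c {i k : ℕ} (hi : 1 ≤ i) (him : i ≤ m) (hk : k ≤ n + 1) :
      ReflTransGen (Supports (PPhi m n C) (cycleAtoms m n Q)) (litAtom (i, Q i)) (Atom.c k) :=
    ((reflTransGen_litAtom_of_le hi him le_rfl).tail (supports_litAtom_last_c_zero hm)).trans
      (reflTransGen_c_of_le hcov (Nat.zero_le k) hk)
  simp only [cycleAtoms, Finset.mem_union, Finset.mem_image, Finset.mem_Icc] at hx hy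
  have to_c_zero : ReflTransGen (Supports (PPhi m n C) (cycleAtoms m n Q)) x (Atom.c 0) := by
    rcases hx with ⟨k, ⟨-, hk⟩, rfl⟩ | ⟨i, ⟨hi, him⟩, rfl⟩
    · exact (c_to_lit hk hm le_rfl).trans (lit_to_c hm le_rfl (Nat.zero_le _))
    · exact lit_to_c hi him (Nat.zero_le _)
  have from_c_zero : ReflTransGen (Supports (PPhi m n C) (cycleAtoms m n Q)) (Atom.c 0) y := by
    rcases hy with ⟨k, ⟨-, hk⟩, rfl⟩ | ⟨i, ⟨hi, him⟩, rfl⟩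
    · exact reflTransGen_c_of_le hcov (Nat.zero_le k) hk
    · exact c_to_lit (Nat.zero_le _) hi him
  exact to_c_zero.trans from_c_zero

end CycleAtoms

theorem stmt12_general (m n : ℕ) (hm : 1 ≤ m)
    (C : ℕ → Fin 3 → ℕ × Bool)
    (Q : ℕ → Bool) (E : Finset Atom)
    (hEdef : E = (Finset.Icc 0 (n+1)).image Atom.c ∪
      (Finset.Icc 1 m).image (fun i => if Q i then Atom.a i else Atom.na i))
    (hcov : ∀ i ∈ Finset.Icc 1 n, ∃ β ∈ NV C i, β ∉ E) :
    Elementary (PPhi m n C) E := by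
  have hE : E = cycleAtoms m n Q := by
    rw [hEdef, cycleAtoms]
    congr 2
    funext i
    cases Q i <;> rfl
  subst hE
  exact elementary_of_forall_reflTransGen_supports ⟨_, c_mem_cycleAtoms (Nat.zero_le _)⟩
    fun _ ha _ hb => reflTransGen_supports_cycleAtoms hm hcov ha hb

theorem stmt12 (m n : ℕ) (hm : 1 ≤ m) (hn : 1 ≤ n)
    (C : ℕ → Fin 3 → ℕ × Bool) (hC : ValidCNF m n C)
    (Q : ℕ → Bool) (E : Finset Atom)
    (hEdef : E = (Finset.Icc 0 (n+1)).image Atom.c ∪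
      (Finset.Icc 1 m).image (fun i => if Q i then Atom.a i else Atom.na i))
    (hcov : ∀ i ∈ Finset.Icc 1 n, ∃ β ∈ NV C i, β ∉ E) :
    Elementary (PPhi m n C) E :=
  stmt12_general m n hm C Q E hEdef hcov
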